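/- For the 4-point neighborhood: if S ⊆ ℤ² is such that every x ∈ S has at most 3 orthogonal neighbors in S, then the upper density of S is at most 4/5; moreover the set {x ∈ ℤ² : x₁ + 2x₂ ≢ 0 (mod 5)} has every element with exactly 3 orthogonal neighbors in it and has density exactly 4/5. (Hence δ₄(3) = 4/5.) -/

import Mathlib

open Filter Topology

/-- `y` is an orthogonal (von Neumann) neighbor of `x` in `ℤ²`. -/
def IsOrthNbr (x y : ℤ × ℤ) : Prop :=
  y - x ∈ ({(1, 0), (-1, 0), (0, 1), (0, -1)} : Set (ℤ × ℤ))

/-- The number of orthogonal neighbors of `x` lying in `S`. -/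
noncomputable def orthNbrCount (S : Set (ℤ × ℤ)) (x : ℤ × ℤ) : ℕ :=
  Set.ncard {y ∈ S | IsOrthNbr x y}

/-- The box `B_r = {x : |x₁| < r, |x₂| < r}`. -/
def box (r : ℕ) : Set (ℤ × ℤ) :=
  {x | |x.1| < (r : ℤ) ∧ |x.2| < (r : ℤ)}

/-- The upper density of `S ⊆ ℤ²`: `limsup_{r → ∞} |S ∩ B_r| / (2r-1)²`. -/
noncomputable def upperDensity (S : Set (ℤ × ℤ)) : ℝ :=
  limsup (fun r : ℕ => (Set.ncard (S ∩ box r) : ℝ) / (2 * (r : ℝ) - 1) ^ 2) atTop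

/-- `S` has density `d`: the sequence `|S ∩ B_r| / (2r-1)²` tends to `d`. -/
def HasDensity (S : Set (ℤ × ℤ)) (d : ℝ) : Prop :=
  Tendsto (fun r : ℕ => (Set.ncard (S ∩ box r) : ℝ) / (2 * (r : ℝ) - 1) ^ 2) atTop (𝓝 d)

/-!
Upper bound: a point of `S` with at most 3 neighbors in `S` has a neighbor outside `S`, which
lies in `B_{r+1}` when the point lies in `B_r`. Choosing one such neighbor gives a map
`S ∩ B_r → Sᶜ ∩ B_{r+1}` with fibers of size at most 4, so
`|S ∩ B_r| ≤ 4 (|B_{r+1}| - |S ∩ B_r|)`, i.e. `5 |S ∩ B_r| ≤ 4 (2r+1)²`.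

Extremal set: `L = {x₁ + 2x₂ ≡ 0 (mod 5)}` is a perfect code: the four neighbors of `x` shift
`x₁ + 2x₂` by the four nonzero residues mod 5, so every point outside `L` has exactly one
neighbor in `L`. Each row of `B_r` meets `L` in one residue class of an interval of length
`2r - 1`, so `|L ∩ B_r| = (2r-1)²/5 + O(r)` and `Lᶜ` has density `4/5`.
-/

open Finset hiding box

def orthDirs : Finset (ℤ × ℤ) := {(1, 0), (-1, 0), (0, 1), (0, -1)}

lemma isOrthNbr_iff_sub_mem_orthDirs {x y : ℤ × ℤ} : IsOrthNbr x y ↔ y - x ∈ orthDirs := by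
  simp [IsOrthNbr, orthDirs]

lemma orthNbrCount_eq_card_filter (S : Set (ℤ × ℤ)) [DecidablePred (· ∈ S)] (x : ℤ × ℤ) :
    orthNbrCount S x = #{d ∈ orthDirs | x + d ∈ S} := by
  have : {y ∈ S | IsOrthNbr x y} = ↑({d ∈ orthDirs | x + d ∈ S}.image (x + ·)) := by
    ext y
    simp only [isOrthNbr_iff_sub_mem_orthDirs, coe_image, coe_filter, Set.mem_image,
      Set.mem_ofPred_eq]
    exact ⟨fun ⟨hy, hd⟩ => ⟨y - x, ⟨hd, by simpa⟩, by abel⟩,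
      fun ⟨d, ⟨hd, hxd⟩, hy⟩ => ⟨hy ▸ hxd, by simpa [← hy]⟩⟩
  rw [orthNbrCount, this, Set.ncard_coe_finset, card_image_of_injective _ (add_right_injective x)]

lemma exists_orthNbr_notMem_of_orthNbrCount_le_three {S : Set (ℤ × ℤ)} {x : ℤ × ℤ}
    (h : orthNbrCount S x ≤ 3) : ∃ d ∈ orthDirs, x + d ∉ S := by
  classical
  by_contra! hall
  rw [orthNbrCount_eq_card_filter, filter_true_of_mem hall] at h
  simp [orthDirs] at h

noncomputable def boxFinset (r : ℕ) : Finset (ℤ × ℤ) :=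
  Ioc (-(r : ℤ)) (r - 1) ×ˢ Ioc (-(r : ℤ)) (r - 1)

lemma coe_boxFinset (r : ℕ) : (boxFinset r : Set (ℤ × ℤ)) = box r := by
  ext x
  simp only [boxFinset, coe_product, coe_Ioc, Set.mem_prod, Set.mem_Ioc, box, Set.mem_ofPred_eq,
    abs_lt]
  omega

lemma card_boxFinset (r : ℕ) : #(boxFinset r) = (2 * r - 1) ^ 2 := by
  rw [boxFinset, card_product, Int.card_Ioc, sq]
  congr <;> omega

lemma ncard_inter_box (S : Set (ℤ × ℤ)) [DecidablePred (· ∈ S)] (r : ℕ) :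
    (S ∩ box r).ncard = #{x ∈ boxFinset r | x ∈ S} := by
  rw [← Set.ncard_coe_finset, coe_filter, ← coe_boxFinset, Set.inter_comm]
  rfl

lemma ncard_inter_box_add_ncard_compl_inter_box (S : Set (ℤ × ℤ)) (r : ℕ) :
    (S ∩ box r).ncard + (Sᶜ ∩ box r).ncard = (2 * r - 1) ^ 2 := by
  rw [← card_boxFinset, ← Set.ncard_coe_finset, coe_boxFinset, Set.inter_comm, Set.inter_comm Sᶜ,
    ← Set.sdiff_eq, Set.ncard_inter_add_ncard_sdiff_eq_ncard _ _ (coe_boxFinset r ▸ finite_toSet _)]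

noncomputable def densityRatio (S : Set (ℤ × ℤ)) (r : ℕ) : ℝ :=
  (S ∩ box r).ncard / (2 * (r : ℝ) - 1) ^ 2

lemma two_mul_natCast_sub_one_pos {r : ℕ} (hr : 1 ≤ r) : (0 : ℝ) < 2 * r - 1 := by
  have : (1 : ℝ) ≤ r := by exact_mod_cast hr
  linarith

lemma upperDensity_le_of_ncard_inter_box_le {S : Set (ℤ × ℤ)} {c : ℝ}
    (h : ∀ r : ℕ, (S ∩ box r).ncard ≤ c * (2 * r + 1) ^ 2) : upperDensity S ≤ c := by
  have hc : 0 ≤ c := by simpa using (Nat.cast_nonneg _).trans (h 0)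
  have hle : ∀ r : ℕ, 1 ≤ r → densityRatio S r ≤ c * (1 + 8 / r) := fun r hr => by
    have hr' : (1 : ℝ) ≤ r := by exact_mod_cast hr
    have hgap : (0 : ℝ) ≤ 8 * (3 * r - 1) * (r - 1) / r :=
      div_nonneg (mul_nonneg (by linarith) (by linarith)) (by linarith)
    have hsq : (2 * r + 1 : ℝ) ^ 2 ≤ (1 + 8 / r) * (2 * r - 1) ^ 2 := calc
      (2 * r + 1 : ℝ) ^ 2 ≤ (2 * r + 1) ^ 2 + 8 * (3 * r - 1) * (r - 1) / r :=
        le_add_of_nonneg_right hgap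
      _ = (1 + 8 / r) * (2 * r - 1) ^ 2 := by field_simp; ring
    rw [densityRatio, div_le_iff₀ (pow_pos (two_mul_natCast_sub_one_pos hr) 2), mul_assoc]
    exact (h r).trans (mul_le_mul_of_nonneg_left hsq hc)
  have hlim : Tendsto (fun r : ℕ => c * (1 + 8 / r)) atTop (𝓝 c) := by
    simpa using ((tendsto_const_nhds (x := (1 : ℝ))).add
      (tendsto_const_div_atTop_nhds_zero_nat 8)).const_mul c
  refine (limsup_le_limsup (eventually_atTop.mpr ⟨1, hle⟩) ?_ hlim.isBoundedUnder_le).trans_eq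
    hlim.limsup_eq
  exact isBoundedUnder_of ⟨0, fun r => by unfold densityRatio; positivity⟩ |>.isCoboundedUnder_le

lemma hasDensity_of_abs_ncard_inter_box_sub_le {S : Set (ℤ × ℤ)} {d C : ℝ}
    (h : ∀ r : ℕ, 1 ≤ r → |(S ∩ box r).ncard - d * (2 * r - 1) ^ 2| ≤ C * (2 * r - 1)) :
    HasDensity S d := by
  have hle : ∀ r : ℕ, 1 ≤ r → ‖densityRatio S r - d‖ ≤ C / (2 * r - 1) := fun r hr => by
    have hpos := two_mul_natCast_sub_one_pos hr
    have hsq := pow_pos hpos 2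
    have hdiff : densityRatio S r - d =
        ((S ∩ box r).ncard - d * (2 * r - 1) ^ 2) / (2 * r - 1) ^ 2 := by
      rw [densityRatio]
      field_simp
    calc ‖densityRatio S r - d‖
        = |(S ∩ box r).ncard - d * (2 * r - 1) ^ 2| / (2 * r - 1) ^ 2 := by
          rw [Real.norm_eq_abs, hdiff, abs_div, abs_of_pos hsq]
      _ ≤ C * (2 * r - 1) / (2 * r - 1) ^ 2 := by gcongr; exact h r hr
      _ = C / (2 * r - 1) := by field_simp
  have htop : Tendsto (fun r : ℕ => 2 * (r : ℝ) - 1) atTop atTop :=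
    tendsto_atTop_add_const_right _ (-1) (tendsto_natCast_atTop_atTop.const_mul_atTop two_pos)
  have hlim := squeeze_zero_norm' (eventually_atTop.mpr ⟨1, hle⟩)
    (tendsto_const_nhds.div_atTop htop)
  exact (by simpa using hlim.add_const d : Tendsto (densityRatio S) atTop (𝓝 d))

lemma boxFinset_subset_succ (r : ℕ) : boxFinset r ⊆ boxFinset (r + 1) := by
  intro x
  simp only [boxFinset, mem_product, mem_Ioc]
  omega

lemma add_mem_boxFinset_succ {x d : ℤ × ℤ} {r : ℕ} (hx : x ∈ boxFinset r) (hd : d ∈ orthDirs) :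
    x + d ∈ boxFinset (r + 1) := by
  simp only [orthDirs, mem_insert, mem_singleton] at hd
  simp only [boxFinset, mem_product, mem_Ioc] at hx ⊢
  rcases hd with rfl | rfl | rfl | rfl <;> simp <;> omega

lemma five_mul_ncard_inter_box_le {S : Set (ℤ × ℤ)} (hS : ∀ x ∈ S, ∃ d ∈ orthDirs, x + d ∉ S)
    (r : ℕ) : 5 * (S ∩ box r).ncard ≤ 4 * (2 * r + 1) ^ 2 := by
  classical
  rw [ncard_inter_box]
  have hS' : ∀ x, ∃ d ∈ orthDirs, x ∈ S → x + d ∉ S := fun x => by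
    by_cases hx : x ∈ S
    · obtain ⟨d, hd, hdS⟩ := hS x hx
      exact ⟨d, hd, fun _ => hdS⟩
    · exact ⟨(1, 0), by simp [orthDirs], fun h => absurd h hx⟩
  choose d hd hdS using hS'
  set A := {x ∈ boxFinset r | x ∈ S}
  set C := {y ∈ boxFinset (r + 1) | y ∉ S}
  have hmaps : ∀ x ∈ A, x + d x ∈ C := fun x hx => by
    rw [mem_filter] at hx ⊢
    exact ⟨add_mem_boxFinset_succ hx.1 (hd x), hdS x hx.2⟩
  have hfibers : ∀ y ∈ C, #{x ∈ A | x + d x = y} ≤ 4 := fun y _ => calc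
    #{x ∈ A | x + d x = y} ≤ #(orthDirs.image (y - ·)) := card_le_card fun x hx => by
        rw [mem_filter] at hx
        exact mem_image.mpr ⟨d x, hd x, by rw [← hx.2]; abel⟩
    _ ≤ #orthDirs := card_image_le
    _ = 4 := rfl
  have hAC : #A ≤ 4 * #C := card_le_mul_card_image_of_maps_to hmaps 4 hfibers
  have hA : #A ≤ #{x ∈ boxFinset (r + 1) | x ∈ S} :=
    card_le_card (filter_subset_filter _ (boxFinset_subset_succ r))
  have hpart : #{x ∈ boxFinset (r + 1) | x ∈ S} + #C = (2 * r + 1) ^ 2 := by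
    rw [card_filter_add_card_filter_not, card_boxFinset, show 2 * (r + 1) - 1 = 2 * r + 1 by omega]
  omega

lemma upperDensity_le_of_orthNbrCount_le_three {S : Set (ℤ × ℤ)}
    (hS : ∀ x ∈ S, orthNbrCount S x ≤ 3) : upperDensity S ≤ 4 / 5 :=
  upperDensity_le_of_ncard_inter_box_le fun r => by
    have := five_mul_ncard_inter_box_le
      (fun x hx => exists_orthNbr_notMem_of_orthNbrCount_le_three (hS x hx)) r
    rw [div_mul_eq_mul_div, le_div_iff₀ (by norm_num), mul_comm]
    exact_mod_cast this

lemma Int.abs_mul_card_Ioc_filter_modEq_sub_lt {a b m : ℤ} (v : ℤ) (hm : 0 < m) (hab : a ≤ b) :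
    |m * #{x ∈ Ioc a b | x ≡ v [ZMOD m]} - (b - a)| < m := by
  have hmq : (0 : ℚ) < m := by exact_mod_cast hm
  have hcard := Int.Ioc_filter_modEq_card a b hm v
  have hmono : ⌊(a - v) / (m : ℚ)⌋ ≤ ⌊(b - v) / (m : ℚ)⌋ :=
    Int.floor_mono (div_le_div_of_nonneg_right (by exact_mod_cast sub_le_sub_right hab v) hmq.le)
  rw [max_eq_left (sub_nonneg.mpr hmono)] at hcard
  have floor_bounds (n : ℤ) : (n - m : ℚ) < m * ⌊n / (m : ℚ)⌋ ∧ m * ⌊n / (m : ℚ)⌋ ≤ (n : ℚ) := by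
    have h1 := mul_lt_mul_of_pos_left (Int.lt_floor_add_one (n / (m : ℚ))) hmq
    have h2 := mul_le_mul_of_nonneg_left (Int.floor_le (n / (m : ℚ))) hmq.le
    rw [mul_div_cancel₀ _ hmq.ne'] at h1 h2
    constructor <;> linarith
  obtain ⟨ha₁, ha₂⟩ := floor_bounds (a - v)
  obtain ⟨hb₁, hb₂⟩ := floor_bounds (b - v)
  rw [abs_sub_lt_iff]
  qify at hcard ⊢
  rw [hcard]
  push_cast at ha₁ ha₂ hb₁ hb₂ ⊢
  constructor <;> linarith

def perfectCode : Set (ℤ × ℤ) := {x | x.1 + 2 * x.2 ≡ 0 [ZMOD 5]}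

lemma add_mem_perfectCode_iff (x d : ℤ × ℤ) :
    x + d ∈ perfectCode ↔ (x.1 + 2 * x.2 + (d.1 + 2 * d.2)) % 5 = 0 := by
  simp only [perfectCode, Set.mem_ofPred_eq, Int.ModEq, Prod.fst_add, Prod.snd_add]
  omega

lemma orthNbrCount_compl_perfectCode {x : ℤ × ℤ} (hx : x ∉ perfectCode) :
    orthNbrCount perfectCodeᶜ x = 3 := by
  classical
  rw [orthNbrCount_eq_card_filter]
  simp only [Set.mem_compl_iff, add_mem_perfectCode_iff, ← Int.emod_add_emod (x.1 + 2 * x.2)]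
  have hx' : (x.1 + 2 * x.2) % 5 ∈ Finset.Ioo 0 5 := by
    simp only [perfectCode, Set.mem_ofPred_eq, Int.ModEq] at hx
    simp only [mem_Ioo]
    omega
  generalize (x.1 + 2 * x.2) % 5 = c at hx'
  revert c
  decide

lemma abs_five_mul_ncard_perfectCode_inter_box_sub_le {r : ℕ} (hr : 1 ≤ r) :
    |5 * ((perfectCode ∩ box r).ncard : ℤ) - (2 * r - 1) ^ 2| ≤ 4 * (2 * (r : ℤ) - 1) := by
  classical
  set I := Ioc (-(r : ℤ)) (r - 1)
  have hI : (#I : ℤ) = 2 * r - 1 := by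
    rw [Int.card_Ioc]
    omega
  have hrows : (perfectCode ∩ box r).ncard = ∑ b ∈ I, #{a ∈ I | a ≡ -2 * b [ZMOD 5]} := by
    rw [ncard_inter_box, boxFinset, card_filter, sum_product_right]
    refine sum_congr rfl fun b _ => ?_
    rw [card_filter]
    refine sum_congr rfl fun a _ => ?_
    simp only [perfectCode, Set.mem_ofPred_eq, Int.ModEq]
    congr 1
    exact propext (by omega)
  have hrow (b : ℤ) : |5 * (#{a ∈ I | a ≡ -2 * b [ZMOD 5]} : ℤ) - (2 * r - 1)| ≤ 4 := by
    have := Int.abs_mul_card_Ioc_filter_modEq_sub_lt (-2 * b) (by norm_num : (0 : ℤ) < 5)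
      (show -(r : ℤ) ≤ r - 1 by omega)
    rw [show (r : ℤ) - 1 - -r = 2 * r - 1 by ring] at this
    exact Int.le_of_lt_add_one this
  calc |5 * ((perfectCode ∩ box r).ncard : ℤ) - (2 * r - 1) ^ 2|
      = |∑ b ∈ I, (5 * (#{a ∈ I | a ≡ -2 * b [ZMOD 5]} : ℤ) - (2 * r - 1))| := by
        rw [hrows, sum_sub_distrib, sum_const, nsmul_eq_mul, hI]
        push_cast
        rw [mul_sum, sq]
    _ ≤ ∑ b ∈ I, |5 * (#{a ∈ I | a ≡ -2 * b [ZMOD 5]} : ℤ) - (2 * r - 1)| := abs_sum_le_sum_abs _ _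
    _ ≤ ∑ _b ∈ I, 4 := sum_le_sum fun b _ => hrow b
    _ = 4 * (2 * r - 1) := by rw [sum_const, nsmul_eq_mul, hI, mul_comm]

lemma hasDensity_compl_perfectCode : HasDensity perfectCodeᶜ (4 / 5) := by
  refine hasDensity_of_abs_ncard_inter_box_sub_le (C := 4 / 5) fun r hr => ?_
  have hsum := ncard_inter_box_add_ncard_compl_inter_box perfectCode r
  zify [Nat.one_le_iff_ne_zero.mpr (by omega : 2 * r ≠ 0)] at hsum
  have hsumR : ((perfectCode ∩ box r).ncard : ℝ) + (perfectCodeᶜ ∩ box r).ncard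
      = (2 * r - 1) ^ 2 := by exact_mod_cast hsum
  have hcount :
      |5 * ((perfectCode ∩ box r).ncard : ℝ) - (2 * r - 1) ^ 2| ≤ 4 * (2 * (r : ℝ) - 1) := by
    exact_mod_cast abs_five_mul_ncard_perfectCode_inter_box_sub_le hr
  rw [abs_le] at hcount ⊢
  constructor <;> linarith

theorem delta4_three :
    (∀ S : Set (ℤ × ℤ), (∀ x ∈ S, orthNbrCount S x ≤ 3) → upperDensity S ≤ 4 / 5) ∧
    (∀ x ∈ {x : ℤ × ℤ | ¬ x.1 + 2 * x.2 ≡ 0 [ZMOD 5]},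
      orthNbrCount {x : ℤ × ℤ | ¬ x.1 + 2 * x.2 ≡ 0 [ZMOD 5]} x = 3) ∧
    HasDensity {x : ℤ × ℤ | ¬ x.1 + 2 * x.2 ≡ 0 [ZMOD 5]} (4 / 5) :=
  ⟨fun _ => upperDensity_le_of_orthNbrCount_le_three, fun _ => orthNbrCount_compl_perfectCode,
    hasDensity_compl_perfectCode⟩
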